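/- arXiv:1402.3330 — 3 statements merged into one kernel-verified Lean document; each statement's English description precedes it below -/
import Mathlib

section
/- Let X = (X₁,…,X_N) be a random vector with independent components having joint density f_X, and let y be square-integrable with ADD component functions y_u. Suppose the variance σ_u² := E[y_u²(X_u)] of every zero-mean ADD component function satisfies σ_u² ≤ c·q^{−|u|} for all ∅ ≠ u ⊆ {1,…,N}, where c > 0 and q > 1 are real constants. Then the mean-squared error committed by the S-variate ADD approximation, ẽ_S := E[(y(X) − ỹ_S(X))²], satisfies ẽ_S ≤ c · Σ_{s=S+1}^{N} binom(N, s) q^{−s}, for every 0 ≤ S ≤ N. -/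
/-!
Write `E_u g` for `condMean μ g u`. Resampling the coordinates outside `u` preserves the
product measure, so `E_b (E_a g) = E_{a ∩ b} g` a.e. and `E_b` pulls out factors of the form
`E_b g`; together these show that the Gram matrix `∫ E_a y · E_b y` depends only on `a ∩ b`.
Since the ADD components satisfy `∑_{v ⊆ u} Y_v = E_u y`, an induction over subsets turns this
into `∫ Y_u · E_b y = 0` for `u ⊄ b`, and a second one into `∫ Y_u · Y_v = 0` for `u ⊄ v`.
Hence the error `y - ỹ_S = ∑_{|u| > S} Y_u` has mean square `∑_{|u| > S} σ_u²`, which the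
variance bound controls by `c ∑_{s > S} C(N, s) q^{-s}`.
-/

open MeasureTheory Finset
open scoped BigOperators Classical

/-- The joint (product) measure of the independent coordinates. -/
noncomputable def joint {N : ℕ} (μ : Fin N → MeasureTheory.Measure ℝ) :
    MeasureTheory.Measure (Fin N → ℝ) :=
  MeasureTheory.Measure.pi μ

/-- The conditional mean of `y` given the coordinates in `u` (integrating out the rest). -/
noncomputable def condMean {N : ℕ} (μ : Fin N → MeasureTheory.Measure ℝ)
    (y : (Fin N → ℝ) → ℝ) (u : Finset (Fin N)) (x : Fin N → ℝ) : ℝ :=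
  ∫ z, y (fun i => if i ∈ u then x i else z i) ∂(joint μ)

/-- `Y` is the family of ANOVA dimensional decomposition (ADD) component functions of `y`. -/
def IsADD {N : ℕ} (μ : Fin N → MeasureTheory.Measure ℝ) (y : (Fin N → ℝ) → ℝ)
    (Y : Finset (Fin N) → (Fin N → ℝ) → ℝ) : Prop :=
  (∀ x, Y ∅ x = ∫ z, y z ∂(joint μ)) ∧
  ∀ u : Finset (Fin N), u ≠ ∅ → ∀ x,
    Y u x = condMean μ y u x - ∑ v ∈ u.powerset.erase u, Y v x

section Piecewise

variable {ι : Type*} [DecidableEq ι] {α : ι → Type*} [∀ i, MeasurableSpace (α i)]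

theorem measurable_piecewise_prod (u : Finset ι) :
    Measurable fun p : (∀ i, α i) × (∀ i, α i) => u.piecewise p.1 p.2 :=
  measurable_pi_lambda _ fun i => by
    by_cases hi : i ∈ u <;> simp only [Finset.piecewise, hi, if_true, if_false] <;> fun_prop

theorem measurePreserving_piecewise [Fintype ι] (μ : ∀ i, Measure (α i))
    [∀ i, IsProbabilityMeasure (μ i)] (u : Finset ι) :
    MeasurePreserving (fun p : (∀ i, α i) × (∀ i, α i) => u.piecewise p.1 p.2)
      ((Measure.pi μ).prod (Measure.pi μ)) (Measure.pi μ) := by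
  refine ⟨measurable_piecewise_prod u, (Measure.pi_eq fun s hs => ?_).symm⟩
  have hpre : (fun p : (∀ i, α i) × (∀ i, α i) => u.piecewise p.1 p.2) ⁻¹' Set.univ.pi s =
      Set.univ.pi (fun i => if i ∈ u then s i else Set.univ) ×ˢ
        Set.univ.pi (fun i => if i ∈ u then Set.univ else s i) := by
    ext p
    simp only [Set.mem_preimage, Set.mem_pi, Set.mem_univ, true_implies, Set.mem_prod,
      Finset.piecewise]
    rw [← forall_and]
    refine forall_congr' fun i => ?_
    by_cases hi : i ∈ u <;> simp [hi]
  rw [Measure.map_apply (measurable_piecewise_prod u) (.univ_pi hs), hpre, Measure.prod_prod,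
    Measure.pi_pi, Measure.pi_pi, ← Finset.prod_mul_distrib]
  refine Finset.prod_congr rfl fun i _ => ?_
  by_cases hi : i ∈ u <;> simp [hi]

theorem Finset.piecewise_piecewise_eq_inter_sdiff {π : ι → Type*} (a b : Finset ι)
    (x w z : ∀ i, π i) :
    a.piecewise (b.piecewise x w) z = (a ∩ b).piecewise x ((a \ b).piecewise w z) := by
  ext i
  by_cases ha : i ∈ a <;> by_cases hb : i ∈ b <;> simp [ha, hb]

end Piecewise

section PowersetSums

variable {ι M : Type*} [DecidableEq ι] [AddCommGroup M]

theorem Finset.eq_zero_of_sum_powerset_filter_eq_zero {P : Finset ι → Prop} [DecidablePred P]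
    {f : Finset ι → M} (h : ∀ u, P u → ∑ v ∈ u.powerset with P v, f v = 0) :
    ∀ u, P u → f u = 0 := by
  intro u
  induction u using Finset.strongInduction with
  | H u ih =>
    intro hu
    have hsum := h u hu
    rwa [← Finset.add_sum_erase _ _ (Finset.mem_filter.2 ⟨Finset.mem_powerset_self u, hu⟩),
      Finset.sum_eq_zero, add_zero] at hsum
    intro v hv
    obtain ⟨hvu, hvP⟩ := Finset.mem_filter.1 (Finset.mem_of_mem_erase hv)
    exact ih v (Finset.ssubset_iff_subset_ne.2 ⟨Finset.mem_powerset.1 hvu,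
      Finset.ne_of_mem_erase hv⟩) hvP

theorem Finset.eq_zero_of_sum_powerset_eq_comp_inter {g : Finset ι → M} {k : Finset ι → M}
    {b : Finset ι} (hk : ∀ u, ∑ v ∈ u.powerset, g v = k (u ∩ b)) {u : Finset ι}
    (hu : ¬ u ⊆ b) : g u = 0 := by
  refine Finset.eq_zero_of_sum_powerset_filter_eq_zero (P := (¬ · ⊆ b)) (fun u _ => ?_) u hu
  have hinter : (u ∩ b).powerset = u.powerset.filter (· ⊆ b) := by
    ext v; simp only [Finset.mem_powerset, Finset.mem_filter, Finset.subset_inter_iff]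
  have hsplit := Finset.sum_filter_add_sum_filter_not u.powerset (· ⊆ b) g
  rwa [← hinter, hk, hk, Finset.inter_assoc, Finset.inter_self, add_eq_left] at hsplit

theorem Finset.eq_zero_of_sum_powerset_eq_zero {f : Finset ι → M} {u : Finset ι}
    (hf : ∀ v, ¬ u ⊆ v → ∑ w ∈ v.powerset, f w = 0) {v : Finset ι} (hv : ¬ u ⊆ v) :
    f v = 0 := by
  refine Finset.eq_zero_of_sum_powerset_filter_eq_zero (P := (¬ u ⊆ ·)) (fun v hv => ?_) v hv
  rw [Finset.filter_true_of_mem (p := (¬ u ⊆ ·))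
    fun w hw huw => hv (huw.trans (Finset.mem_powerset.1 hw))]
  exact hf v hv

end PowersetSums

section CondMean

variable {N : ℕ} {μ : Fin N → Measure ℝ}

theorem condMean_apply (g : (Fin N → ℝ) → ℝ) (u : Finset (Fin N)) (x : Fin N → ℝ) :
    condMean μ g u x = ∫ z, g (u.piecewise x z) ∂(joint μ) :=
  rfl

theorem condMean_mul_condMean_self (g h : (Fin N → ℝ) → ℝ) (b : Finset (Fin N)) :
    condMean μ (fun t => h t * condMean μ g b t) b =
      fun x => condMean μ h b x * condMean μ g b x := by
  ext x
  simp_rw [condMean_apply, Finset.piecewise_idem_left]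
  exact integral_mul_const _ _

variable [∀ i, IsProbabilityMeasure (μ i)]

instance : IsProbabilityMeasure (joint μ) := by
  unfold joint; infer_instance

theorem measurePreserving_piecewise_joint (u : Finset (Fin N)) :
    MeasurePreserving (fun p : (Fin N → ℝ) × (Fin N → ℝ) => u.piecewise p.1 p.2)
      ((joint μ).prod (joint μ)) (joint μ) :=
  measurePreserving_piecewise μ u

theorem aestronglyMeasurable_condMean {g : (Fin N → ℝ) → ℝ}
    (hg : AEStronglyMeasurable g (joint μ)) (u : Finset (Fin N)) :
    AEStronglyMeasurable (condMean μ g u) (joint μ) :=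
  (hg.comp_measurePreserving (measurePreserving_piecewise_joint u)).integral_prod_right'

theorem integrable_comp_piecewise {g : (Fin N → ℝ) → ℝ} (hg : Integrable g (joint μ))
    (u : Finset (Fin N)) :
    Integrable (fun p : (Fin N → ℝ) × (Fin N → ℝ) => g (u.piecewise p.1 p.2))
      ((joint μ).prod (joint μ)) :=
  (measurePreserving_piecewise_joint u).integrable_comp_of_integrable hg

theorem integral_condMean {g : (Fin N → ℝ) → ℝ} (hg : Integrable g (joint μ))
    (u : Finset (Fin N)) :
    ∫ x, condMean μ g u x ∂(joint μ) = ∫ x, g x ∂(joint μ) := by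
  have hmp := measurePreserving_piecewise_joint (μ := μ) u
  simp_rw [condMean_apply]
  rw [integral_integral (integrable_comp_piecewise hg u), ← integral_map
    hmp.measurable.aemeasurable (by rw [hmp.map_eq]; exact hg.aestronglyMeasurable), hmp.map_eq]

theorem memLp_condMean {g : (Fin N → ℝ) → ℝ} (hg : MemLp g 2 (joint μ))
    (u : Finset (Fin N)) :
    MemLp (condMean μ g u) 2 (joint μ) := by
  have hsq : Integrable (fun p : (Fin N → ℝ) × (Fin N → ℝ) => g (u.piecewise p.1 p.2) ^ 2)
      ((joint μ).prod (joint μ)) :=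
    integrable_comp_piecewise hg.integrable_sq u
  have hslice : ∀ᵐ x ∂(joint μ), MemLp (fun z => g (u.piecewise x z)) 2 (joint μ) := by
    filter_upwards [hsq.prod_right_ae, (hg.1.comp_measurePreserving
      (measurePreserving_piecewise_joint u)).prodMk_left] with x hint hmeas
    exact (memLp_two_iff_integrable_sq hmeas).2 hint
  refine (memLp_two_iff_integrable_sq (aestronglyMeasurable_condMean hg.1 u)).2 ?_
  refine hsq.integral_prod_left.mono' ((aestronglyMeasurable_condMean hg.1 u).pow 2) ?_
  filter_upwards [hslice] with x hx
  -- Jensen's inequality `(∫ h)² ≤ ∫ h²`, in the form `0 ≤ Var h`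
  rw [Real.norm_eq_abs, abs_of_nonneg (sq_nonneg _), condMean_apply]
  have := ProbabilityTheory.variance_nonneg (fun z => g (u.piecewise x z)) (joint μ)
  rw [ProbabilityTheory.variance_eq_sub hx] at this
  exact sub_nonneg.1 this

theorem condMean_condMean {g : (Fin N → ℝ) → ℝ} (hg : Integrable g (joint μ))
    (a b : Finset (Fin N)) :
    condMean μ (condMean μ g a) b =ᵐ[joint μ] condMean μ g (a ∩ b) := by
  filter_upwards [(integrable_comp_piecewise hg (a ∩ b)).prod_right_ae] with x hx
  simp_rw [condMean_apply, Finset.piecewise_piecewise_eq_inter_sdiff]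
  exact integral_condMean hx (a \ b)

theorem integral_condMean_mul_condMean_eq_inter {g : (Fin N → ℝ) → ℝ}
    (hg : MemLp g 2 (joint μ)) (a b : Finset (Fin N)) :
    ∫ x, condMean μ g a x * condMean μ g b x ∂(joint μ) =
      ∫ x, condMean μ g (a ∩ b) x * condMean μ g b x ∂(joint μ) := by
  have hint : Integrable (fun x => condMean μ g a x * condMean μ g b x) (joint μ) :=
    (memLp_condMean hg a).integrable_mul (memLp_condMean hg b)
  rw [← integral_condMean hint b, condMean_mul_condMean_self]
  refine integral_congr_ae ?_
  filter_upwards [condMean_condMean (hg.integrable one_le_two) a b] with x hx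
  rw [hx]

theorem integral_condMean_mul_condMean {g : (Fin N → ℝ) → ℝ} (hg : MemLp g 2 (joint μ))
    (a b : Finset (Fin N)) :
    ∫ x, condMean μ g a x * condMean μ g b x ∂(joint μ) =
      ∫ x, condMean μ g (a ∩ b) x * condMean μ g (a ∩ b) x ∂(joint μ) := by
  rw [integral_condMean_mul_condMean_eq_inter hg]
  simp_rw [mul_comm (condMean μ g (a ∩ b) _)]
  rw [integral_condMean_mul_condMean_eq_inter hg,
    Finset.inter_eq_right.2 Finset.inter_subset_right]

end CondMean

section L2

variable {α κ : Type*} [MeasurableSpace α] {μ : Measure α}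

theorem integral_finset_sum_mul {s : Finset κ} {f : κ → α → ℝ} {g : α → ℝ}
    (hf : ∀ i ∈ s, MemLp (f i) 2 μ) (hg : MemLp g 2 μ) :
    ∫ x, (∑ i ∈ s, f i x) * g x ∂μ = ∑ i ∈ s, ∫ x, f i x * g x ∂μ := by
  simp_rw [Finset.sum_mul]
  exact integral_finsetSum s fun i hi => (hf i hi).integrable_mul hg

theorem integral_sq_finset_sum_of_orthogonal {s : Finset κ} {f : κ → α → ℝ}
    (hf : ∀ i ∈ s, MemLp (f i) 2 μ)
    (horth : ∀ i ∈ s, ∀ j ∈ s, i ≠ j → ∫ x, f i x * f j x ∂μ = 0) :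
    ∫ x, (∑ i ∈ s, f i x) ^ 2 ∂μ = ∑ i ∈ s, ∫ x, f i x ^ 2 ∂μ := by
  simp_rw [sq]
  rw [integral_finset_sum_mul hf (memLp_finsetSum s hf)]
  refine Finset.sum_congr rfl fun i hi => ?_
  simp_rw [mul_comm (f i _)]
  rw [integral_finset_sum_mul hf (hf i hi), Finset.sum_eq_single_of_mem i hi
    fun j hj hji => horth j hj i hi hji]

end L2

theorem Finset.sum_filter_card_gt {ι : Type*} [Fintype ι] (S : ℕ) (g : ℕ → ℝ) :
    ∑ u ∈ Finset.univ.filter (fun u : Finset ι => ¬ u.card ≤ S), g u.card =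
      ∑ s ∈ Finset.Icc (S + 1) (Fintype.card ι), (Fintype.card ι).choose s * g s := by
  rw [Finset.sum_filter, ← Finset.powerset_univ,
    Finset.sum_powerset_apply_card (fun m => if ¬ m ≤ S then g m else 0), Finset.card_univ,
    Finset.sum_congr rfl fun m _ => by rw [nsmul_eq_mul, mul_ite, mul_zero], ← Finset.sum_filter]
  congr 1
  ext m
  simp only [Finset.mem_filter, Finset.mem_range, Finset.mem_Icc]
  omega

section ADD

variable {N : ℕ} {μ : Fin N → Measure ℝ} {y : (Fin N → ℝ) → ℝ}
  {Y : Finset (Fin N) → (Fin N → ℝ) → ℝ}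

theorem IsADD.sum_powerset (hY : IsADD μ y Y) (u : Finset (Fin N)) (x : Fin N → ℝ) :
    ∑ v ∈ u.powerset, Y v x = condMean μ y u x := by
  by_cases hu : u = ∅
  · subst hu
    simp [hY.1 x, condMean_apply]
  · rw [← Finset.add_sum_erase _ _ (Finset.mem_powerset_self u), hY.2 u hu x, sub_add_cancel]

theorem IsADD.eq_sub (hY : IsADD μ y Y) (u : Finset (Fin N)) (x : Fin N → ℝ) :
    Y u x = condMean μ y u x - ∑ v ∈ u.powerset.erase u, Y v x := by
  rw [← hY.sum_powerset, ← Finset.add_sum_erase _ _ (Finset.mem_powerset_self u),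
    add_sub_cancel_right]

variable [∀ i, IsProbabilityMeasure (μ i)]

theorem IsADD.memLp (hY : IsADD μ y Y) (hy : MemLp y 2 (joint μ)) (u : Finset (Fin N)) :
    MemLp (Y u) 2 (joint μ) := by
  induction u using Finset.strongInduction with
  | H u ih =>
    rw [funext (hY.eq_sub u)]
    refine (memLp_condMean hy u).sub (memLp_finsetSum _ fun v hv => ih v ?_)
    exact Finset.ssubset_iff_subset_ne.2
      ⟨Finset.mem_powerset.1 (Finset.mem_of_mem_erase hv), Finset.ne_of_mem_erase hv⟩

theorem IsADD.integral_mul_condMean_eq_zero (hY : IsADD μ y Y) (hy : MemLp y 2 (joint μ))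
    {u b : Finset (Fin N)} (hub : ¬ u ⊆ b) :
    ∫ x, Y u x * condMean μ y b x ∂(joint μ) = 0 := by
  refine Finset.eq_zero_of_sum_powerset_eq_comp_inter
    (g := fun w => ∫ x, Y w x * condMean μ y b x ∂(joint μ))
    (k := fun a => ∫ x, condMean μ y a x * condMean μ y a x ∂(joint μ)) (fun w => ?_) hub
  rw [← integral_finset_sum_mul (fun v _ => hY.memLp hy v) (memLp_condMean hy b)]
  simp_rw [hY.sum_powerset]
  exact integral_condMean_mul_condMean hy w b

theorem IsADD.integral_mul_eq_zero (hY : IsADD μ y Y) (hy : MemLp y 2 (joint μ))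
    {u v : Finset (Fin N)} (huv : ¬ u ⊆ v) :
    ∫ x, Y u x * Y v x ∂(joint μ) = 0 := by
  refine Finset.eq_zero_of_sum_powerset_eq_zero (f := fun v => ∫ x, Y u x * Y v x ∂(joint μ))
    (fun v hv => ?_) huv
  simp_rw [mul_comm (Y u _)]
  rw [← integral_finset_sum_mul (fun w _ => hY.memLp hy w) (hY.memLp hy u)]
  simp_rw [hY.sum_powerset, mul_comm (condMean μ y v _)]
  exact hY.integral_mul_condMean_eq_zero hy hv

theorem IsADD.integral_mul_eq_zero_of_ne (hY : IsADD μ y Y) (hy : MemLp y 2 (joint μ))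
    {u v : Finset (Fin N)} (huv : u ≠ v) :
    ∫ x, Y u x * Y v x ∂(joint μ) = 0 := by
  by_cases h : u ⊆ v
  · simp_rw [mul_comm (Y u _)]
    exact hY.integral_mul_eq_zero hy fun hvu => huv (Finset.Subset.antisymm h hvu)
  · exact hY.integral_mul_eq_zero hy h

theorem IsADD.sum_univ (hY : IsADD μ y Y) (x : Fin N → ℝ) : ∑ u, Y u x = y x := by
  rw [← Finset.powerset_univ, hY.sum_powerset, condMean_apply]
  simp

end ADD

theorem stmt1_general {N : ℕ}
    (μ : Fin N → MeasureTheory.Measure ℝ) [∀ i, IsProbabilityMeasure (μ i)]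
    (y : (Fin N → ℝ) → ℝ) (hy : MemLp y 2 (joint μ))
    (Y : Finset (Fin N) → (Fin N → ℝ) → ℝ) (hY : IsADD μ y Y)
    (c q : ℝ)
    (hvar : ∀ u : Finset (Fin N), u ≠ ∅ →
      ∫ x, (Y u x) ^ 2 ∂(joint μ) ≤ c / q ^ u.card) :
    ∀ S : ℕ, S ≤ N →
      ∫ x, (y x - ∑ u ∈ Finset.univ.filter (fun u : Finset (Fin N) => u.card ≤ S),
          Y u x) ^ 2 ∂(joint μ) ≤
        c * ∑ s ∈ Finset.Icc (S + 1) N, ((N.choose s : ℝ) / q ^ s) := by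
  intro S _
  have herror : ∀ x, y x - ∑ u ∈ Finset.univ.filter (fun u : Finset (Fin N) => u.card ≤ S),
      Y u x = ∑ u ∈ Finset.univ.filter (fun u : Finset (Fin N) => ¬ u.card ≤ S), Y u x :=
    fun x => by rw [← hY.sum_univ x, ← Finset.sum_filter_add_sum_filter_not _ (·.card ≤ S),
      add_sub_cancel_left]
  simp_rw [herror]
  rw [integral_sq_finset_sum_of_orthogonal (fun u _ => hY.memLp hy u)
    fun u _ v _ => hY.integral_mul_eq_zero_of_ne hy]
  calc _ ≤ ∑ u ∈ Finset.univ.filter (fun u : Finset (Fin N) => ¬ u.card ≤ S),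
          c / q ^ u.card :=
        Finset.sum_le_sum fun u hu => hvar u (by rintro rfl; simp at hu)
    _ = _ := by
        rw [Finset.sum_filter_card_gt S (fun s => c / q ^ s), Fintype.card_fin, Finset.mul_sum]
        refine Finset.sum_congr rfl fun s _ => ?_
        ring

/-- Proposition 1: if the variances of the ADD component functions decay
geometrically, `σ_u² ≤ c q^{-|u|}`, then the mean-squared error of the `S`-variate ADD
approximation is bounded by `c ∑_{s=S+1}^{N} C(N,s) q^{-s}`. -/
theorem stmt1 {N : ℕ}
    (f : Fin N → ℝ → ℝ) (hf : ∀ i, Measurable (f i)) (hf0 : ∀ i t, 0 ≤ f i t)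
    (μ : Fin N → MeasureTheory.Measure ℝ) [∀ i, IsProbabilityMeasure (μ i)]
    (hμ : ∀ i, μ i = (volume : MeasureTheory.Measure ℝ).withDensity
      fun t => ENNReal.ofReal (f i t))
    (y : (Fin N → ℝ) → ℝ) (hy : MemLp y 2 (joint μ))
    (Y : Finset (Fin N) → (Fin N → ℝ) → ℝ) (hY : IsADD μ y Y)
    (c q : ℝ) (hc : 0 < c) (hq : 1 < q)
    (hvar : ∀ u : Finset (Fin N), u ≠ ∅ →
      ∫ x, (Y u x) ^ 2 ∂(joint μ) ≤ c / q ^ u.card) :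
    ∀ S : ℕ, S ≤ N →
      ∫ x, (y x - ∑ u ∈ Finset.univ.filter (fun u : Finset (Fin N) => u.card ≤ S),
          Y u x) ^ 2 ∂(joint μ) ≤
        c * ∑ s ∈ Finset.Icc (S + 1) N, ((N.choose s : ℝ) / q ^ s) :=
  stmt1_general μ y hy Y hY c q hvar
end

section
/- Let X = (X₁,…,X_N) be a random vector with independent components having joint density f_X, and let y be square-integrable with respect to f_X. For m ≥ 1, let ỹ_{N,m} denote the N-variate, m-th order truncated PDD approximation of y and let y̌_m denote the m-th order PCE approximation of y (retaining all tensor-product orthonormal polynomial terms of total degree at most m). Then the PCE error is at least the PDD error: e_m := E[(y(X) − y̌_m(X))²] ≥ E[(y(X) − ỹ_{N,m}(X))²] =: e_{N,m}, regardless of the values of the expansion coefficients. -/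
open MeasureTheory Finset
open scoped BigOperators Classical

/-- The product orthonormal polynomial `ψ_{u,j}(x) = ∏_{i ∈ u} ψ_{i, j_i}(x_i)`. -/
noncomputable def prodPsi {N : ℕ} (ψ : Fin N → ℕ → ℝ → ℝ) (u : Finset (Fin N))
    (j : Fin N → ℕ) (x : Fin N → ℝ) : ℝ :=
  ∏ i ∈ u, ψ i (j i) (x i)

/-- The PDD expansion coefficient `C_{u,j} = ∫ y(x) ψ_{u,j}(x_u) f_X(x) dx`. -/
noncomputable def pddCoeff {N : ℕ} (μ : Fin N → MeasureTheory.Measure ℝ)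
    (y : (Fin N → ℝ) → ℝ) (ψ : Fin N → ℕ → ℝ → ℝ) (u : Finset (Fin N))
    (j : Fin N → ℕ) : ℝ :=
  ∫ x, y x * prodPsi ψ u j x ∂(joint μ)

/-- Admissible multi-indices for the component `u`: supported on `u`, components in `{1,…,m}`. -/
noncomputable def indexFinset {N : ℕ} (u : Finset (Fin N)) (m : ℕ) : Finset (Fin N → ℕ) :=
  (Finset.Icc 0 fun _ => m).filter fun j => (∀ i ∈ u, 1 ≤ j i) ∧ ∀ i ∉ u, j i = 0

/-- The set of all admissible multi-indices for the component `u`: supported on `u` with all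
components there at least `1`. -/
def indexSet {N : ℕ} (u : Finset (Fin N)) : Set (Fin N → ℕ) :=
  {j | (∀ i ∈ u, 1 ≤ j i) ∧ ∀ i ∉ u, j i = 0}

/-- `ψ` is, coordinatewise, a complete orthonormal system in `L²(μ i)` with `ψ_{i,0} = 1`. -/
def IsONBasis {N : ℕ} (μ : Fin N → MeasureTheory.Measure ℝ)
    (ψ : Fin N → ℕ → ℝ → ℝ) : Prop :=
  (∀ i t, ψ i 0 t = 1) ∧
  (∀ i j, MemLp (ψ i j) 2 (μ i)) ∧
  (∀ i j k, ∫ t, ψ i j t * ψ i k t ∂(μ i) = if j = k then 1 else 0) ∧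
  (∀ i (g : ℝ → ℝ), MemLp g 2 (μ i) →
    (∀ j, ∫ t, g t * ψ i j t ∂(μ i) = 0) → g =ᵐ[μ i] 0)

/-- The `S`-variate, `m`-th order truncated PDD approximation `ỹ_{S,m}`. -/
noncomputable def pddTrunc {N : ℕ} (μ : Fin N → MeasureTheory.Measure ℝ)
    (y : (Fin N → ℝ) → ℝ) (ψ : Fin N → ℕ → ℝ → ℝ) (S m : ℕ) (x : Fin N → ℝ) : ℝ :=
  (∫ z, y z ∂(joint μ)) +
    ∑ u ∈ Finset.univ.filter (fun u : Finset (Fin N) => u ≠ ∅ ∧ u.card ≤ S),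
      ∑ j ∈ indexFinset u m, pddCoeff μ y ψ u j * prodPsi ψ u j x

/-- The `m`-th order PCE approximation `y̌_m`: all tensor-product orthonormal polynomial terms
of total degree at most `m`, with coefficients given by the corresponding inner products. -/
noncomputable def pceApprox {N : ℕ} (μ : Fin N → MeasureTheory.Measure ℝ)
    (y : (Fin N → ℝ) → ℝ) (ψ : Fin N → ℕ → ℝ → ℝ) (m : ℕ) (x : Fin N → ℝ) : ℝ :=
  ∑ j ∈ (Finset.Icc (0 : Fin N → ℕ) fun _ => m).filter (fun j => ∑ i, j i ≤ m),
    pddCoeff μ y ψ Finset.univ j * prodPsi ψ Finset.univ j x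

/-! The `N`-variate truncation `ỹ_{N,m}` keeps every tensor-product basis function whose component
degrees are all at most `m`, while `y̌_m` keeps only those of total degree at most `m`, a subfamily.
Both are expansions in the orthonormal family `x ↦ ∏ᵢ ψ_{i,jᵢ}(xᵢ)` with the Fourier coefficients
of `y`, so each mean-square error is `E[y²]` minus the sum of the squared retained coefficients
(Bessel), and keeping more terms can only decrease it. -/

section Orthonormal

variable {α κ : Type*} [MeasurableSpace α] {ν : Measure α} {y : α → ℝ} {e : κ → α → ℝ}

theorem integral_finsetSum_mul (s : Finset κ) (c : κ → ℝ) {g : α → ℝ}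
    (hint : ∀ j, Integrable (fun x => e j x * g x) ν) :
    ∫ x, (∑ j ∈ s, c j * e j x) * g x ∂ν = ∑ j ∈ s, c j * ∫ x, e j x * g x ∂ν := by
  simp_rw [Finset.sum_mul, mul_assoc]
  rw [integral_finsetSum s fun j _ => (hint j).const_mul (c j)]
  simp_rw [integral_const_mul]

variable [DecidableEq κ] (he : ∀ j, MemLp (e j) 2 ν)
  (horth : ∀ j k, ∫ x, e j x * e k x ∂ν = if j = k then 1 else 0)
include he horth

theorem integral_sq_sub_sum_orthonormal (hy : MemLp y 2 ν) (s : Finset κ) :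
    ∫ x, (y x - ∑ j ∈ s, (∫ z, y z * e j z ∂ν) * e j x) ^ 2 ∂ν =
      ∫ x, y x ^ 2 ∂ν - ∑ j ∈ s, (∫ z, y z * e j z ∂ν) ^ 2 := by
  set c : κ → ℝ := fun j => ∫ z, y z * e j z ∂ν
  set S : α → ℝ := fun x => ∑ j ∈ s, c j * e j x
  have hS : MemLp S 2 ν := memLp_finsetSum s fun j _ => (he j).const_mul (c j)
  have hSy : ∫ x, S x * y x ∂ν = ∑ j ∈ s, c j ^ 2 := by
    rw [integral_finsetSum_mul s c fun j => (he j).integrable_mul hy]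
    simp_rw [mul_comm (e _ _), sq, c]
  have hSe : ∀ k ∈ s, ∫ x, e k x * S x ∂ν = c k := by
    intro k hk
    simp_rw [mul_comm (e k _)]
    rw [integral_finsetSum_mul s c fun j => (he j).integrable_mul (he k)]
    simp [horth, hk]
  have hSS : ∫ x, S x * S x ∂ν = ∑ j ∈ s, c j ^ 2 := by
    rw [integral_finsetSum_mul s c fun j => (he j).integrable_mul hS]
    exact Finset.sum_congr rfl fun k hk => by rw [hSe k hk, sq]
  have hSy_int : Integrable (fun x => 2 * (S x * y x)) ν := (hS.integrable_mul hy).const_mul 2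
  have hSS_int : Integrable (fun x => S x * S x) ν := hS.integrable_mul hS
  have hlin_int : Integrable (fun x => y x ^ 2 - 2 * (S x * y x)) ν :=
    hy.integrable_sq.sub hSy_int
  have hexpand : ∀ x, (y x - S x) ^ 2 = y x ^ 2 - 2 * (S x * y x) + S x * S x := fun x => by ring
  change ∫ x, (y x - S x) ^ 2 ∂ν = _
  simp_rw [hexpand]
  rw [integral_add hlin_int hSS_int, integral_sub hy.integrable_sq hSy_int, integral_const_mul,
    hSy, hSS]
  ring

theorem integral_sq_sub_sum_orthonormal_le_of_subset (hy : MemLp y 2 ν) {s t : Finset κ} (hst : s ⊆ t) :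
    ∫ x, (y x - ∑ j ∈ t, (∫ z, y z * e j z ∂ν) * e j x) ^ 2 ∂ν ≤
      ∫ x, (y x - ∑ j ∈ s, (∫ z, y z * e j z ∂ν) * e j x) ^ 2 ∂ν := by
  rw [integral_sq_sub_sum_orthonormal he horth hy, integral_sq_sub_sum_orthonormal he horth hy]
  exact sub_le_sub_left (Finset.sum_le_sum_of_subset_of_nonneg hst fun _ _ _ => sq_nonneg _) _

end Orthonormal

section ProductBasis

variable {N : ℕ} {μ : Fin N → Measure ℝ} [∀ i, SigmaFinite (μ i)] {ψ : Fin N → ℕ → ℝ → ℝ}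

theorem prodPsi_univ_mul_prodPsi_univ (j k : Fin N → ℕ) (x : Fin N → ℝ) :
    prodPsi ψ univ j x * prodPsi ψ univ k x = ∏ i, ψ i (j i) (x i) * ψ i (k i) (x i) :=
  (Finset.prod_mul_distrib).symm

theorem memLp_prodPsi_univ (hψ : ∀ i j, MemLp (ψ i j) 2 (μ i)) (j : Fin N → ℕ) :
    MemLp (prodPsi ψ univ j) 2 (joint μ) := by
  have hmeas : AEStronglyMeasurable (prodPsi ψ univ j) (joint μ) :=
    Finset.aestronglyMeasurable_fun_prod univ fun i _ =>
      (hψ i (j i)).aestronglyMeasurable.comp_quasiMeasurePreserving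
        (Measure.quasiMeasurePreserving_eval μ i)
  refine (memLp_two_iff_integrable_sq hmeas).2 ?_
  simp_rw [sq, prodPsi_univ_mul_prodPsi_univ]
  exact Integrable.fintype_prod fun i => (hψ i (j i)).integrable_mul (hψ i (j i))

theorem integral_prodPsi_univ_mul_prodPsi_univ
    (hψ : ∀ i j k, ∫ t, ψ i j t * ψ i k t ∂(μ i) = if j = k then 1 else 0) (j k : Fin N → ℕ) :
    ∫ x, prodPsi ψ univ j x * prodPsi ψ univ k x ∂(joint μ) = if j = k then 1 else 0 := by
  simp_rw [prodPsi_univ_mul_prodPsi_univ, joint,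
    integral_fintype_prod_eq_prod (fun i t => ψ i (j i) t * ψ i (k i) t), hψ,
    Fintype.prod_boole, funext_iff]
  congr

end ProductBasis

section PDDAsTensorExpansion

variable {N : ℕ}

theorem mem_indexFinset {u : Finset (Fin N)} {m : ℕ} {j : Fin N → ℕ} :
    j ∈ indexFinset u m ↔ j ∈ Icc 0 (fun _ => m) ∧ univ.filter (fun i => j i ≠ 0) = u := by
  simp only [indexFinset, mem_filter, Finset.ext_iff, mem_univ, true_and]
  refine and_congr_right fun _ => ⟨fun ⟨hpos, hzero⟩ i => ?_, fun h => ⟨?_, ?_⟩⟩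
  · by_cases hi : i ∈ u
    · simpa [hi] using (Nat.one_le_iff_ne_zero.1 (hpos i hi))
    · simpa [hi] using hzero i hi
  · intro i hi; have := (h i).2 hi; omega
  · intro i hi; by_contra hne; exact hi ((h i).1 hne)

theorem sum_Icc_eq_sum_sum_indexFinset {M : Type*} [AddCommMonoid M] (m : ℕ)
    (F : (Fin N → ℕ) → M) :
    ∑ j ∈ Icc 0 (fun _ => m), F j = ∑ u, ∑ j ∈ indexFinset u m, F j := by
  rw [← Finset.sum_fiberwise (Icc 0 fun _ => m) (fun j => univ.filter (fun i => j i ≠ 0))]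
  refine Finset.sum_congr rfl fun u _ => Finset.sum_congr ?_ fun _ _ => rfl
  ext j
  rw [mem_indexFinset, mem_filter]

theorem indexFinset_empty (m : ℕ) : indexFinset (∅ : Finset (Fin N)) m = {0} := by
  ext j
  simp +contextual [indexFinset, funext_iff, Pi.le_def]

variable (μ : Fin N → Measure ℝ) (y : (Fin N → ℝ) → ℝ) (ψ : Fin N → ℕ → ℝ → ℝ) (m : ℕ)
  (x : Fin N → ℝ)

theorem pddTrunc_self_eq_sum_sum_indexFinset :
    pddTrunc μ y ψ N m x = ∑ u, ∑ j ∈ indexFinset u m, pddCoeff μ y ψ u j * prodPsi ψ u j x := by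
  rw [pddTrunc, ← Finset.add_sum_erase univ _ (mem_univ ∅)]
  congr 1
  · simp [indexFinset_empty, pddCoeff, prodPsi]
  · refine Finset.sum_congr ?_ fun _ _ => rfl
    ext u
    simp [card_finset_fin_le]

theorem pddTrunc_self_eq_sum_Icc (hψ0 : ∀ i t, ψ i 0 t = 1) :
    pddTrunc μ y ψ N m x =
      ∑ j ∈ Icc 0 (fun _ => m), pddCoeff μ y ψ univ j * prodPsi ψ univ j x := by
  rw [pddTrunc_self_eq_sum_sum_indexFinset, sum_Icc_eq_sum_sum_indexFinset]
  refine Finset.sum_congr rfl fun u _ => Finset.sum_congr rfl fun j hj => ?_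
  have hsupp : prodPsi ψ u j = prodPsi ψ univ j := funext fun x =>
    Finset.prod_subset (subset_univ u) fun i _ hi => by
      rw [(mem_filter.1 hj).2.2 i hi, hψ0]
  rw [pddCoeff, pddCoeff, hsupp]

end PDDAsTensorExpansion

theorem stmt14_general {N : ℕ} (m : ℕ)
    (μ : Fin N → MeasureTheory.Measure ℝ) [∀ i, IsProbabilityMeasure (μ i)]
    (y : (Fin N → ℝ) → ℝ) (hy : MemLp y 2 (joint μ))
    (ψ : Fin N → ℕ → ℝ → ℝ) (hψ : IsONBasis μ ψ) :
    ∫ x, (y x - pddTrunc μ y ψ N m x) ^ 2 ∂(joint μ) ≤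
      ∫ x, (y x - pceApprox μ y ψ m x) ^ 2 ∂(joint μ) := by
  obtain ⟨hψ0, hψmem, hψorth, -⟩ := hψ
  simp_rw [pddTrunc_self_eq_sum_Icc μ y ψ m _ hψ0]
  exact integral_sq_sub_sum_orthonormal_le_of_subset (memLp_prodPsi_univ hψmem)
    (integral_prodPsi_univ_mul_prodPsi_univ hψorth) hy (filter_subset _ _)

/-- the mean-squared error of the `m`-th order PCE approximation is at least
that of the `N`-variate, `m`-th order PDD approximation, regardless of the values of the
expansion coefficients. -/
theorem stmt14 {N : ℕ} (m : ℕ) (hm : 1 ≤ m)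
    (f : Fin N → ℝ → ℝ) (hf : ∀ i, Measurable (f i)) (hf0 : ∀ i t, 0 ≤ f i t)
    (μ : Fin N → MeasureTheory.Measure ℝ) [∀ i, IsProbabilityMeasure (μ i)]
    (hμ : ∀ i, μ i = (volume : MeasureTheory.Measure ℝ).withDensity
      fun t => ENNReal.ofReal (f i t))
    (y : (Fin N → ℝ) → ℝ) (hy : MemLp y 2 (joint μ))
    (ψ : Fin N → ℕ → ℝ → ℝ) (hψ : IsONBasis μ ψ) :
    ∫ x, (y x - pddTrunc μ y ψ N m x) ^ 2 ∂(joint μ) ≤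
      ∫ x, (y x - pceApprox μ y ψ m x) ^ 2 ∂(joint μ) :=
  stmt14_general m μ y hy ψ hψ
end

section
/- Let X = (X₁,…,X_N) be a random vector with independent components having joint density f_X, let y be square-integrable with respect to f_X with PDD coefficients C_{u,j}, and let 1 ≤ S < N and m ≥ 1. Suppose all PDD coefficients of component functions involving more than S variables vanish: C_{u,j} = 0 for every u with |u| > S and every multi-index j with all components ≥ 1. Then the error of the m-th order PCE approximation is at least the error of the S-variate, m-th order PDD approximation: e_m := E[(y(X) − y̌_m(X))²] ≥ E[(y(X) − ỹ_{S,m}(X))²] =: e_{S,m}. -/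
open MeasureTheory Finset
open scoped BigOperators Classical

/-! The functions `Φ j = prodPsi ψ univ j` are orthonormal in `L²(joint μ)`, and both
approximations are partial sums `∑ j ∈ s, ⟨y, Φ j⟩ Φ j` of the same expansion: over the
multi-indices with at most `S` active coordinates for PDD (`pddIndexFinset`), over those of total
degree at most `m` for PCE. By Bessel's identity such a sum has error `‖y‖² - ∑ j ∈ s, ⟨y, Φ j⟩²`.
The hypothesis kills every coefficient with more than `S` active coordinates, so every PCE index
with a nonzero coefficient is a PDD index, and the PDD error is the smaller one. -/

section Orthonormal

variable {α ι : Type*} [MeasurableSpace α] {ν : Measure α} {Φ : ι → α → ℝ}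

lemma integral_mul_finsetSum {g : α → ℝ} (hg : MemLp g 2 ν) (hΦ : ∀ j, MemLp (Φ j) 2 ν)
    (s : Finset ι) (a : ι → ℝ) :
    ∫ x, g x * ∑ j ∈ s, a j * Φ j x ∂ν = ∑ j ∈ s, a j * ∫ x, g x * Φ j x ∂ν := by
  simp_rw [Finset.mul_sum, mul_left_comm (g _)]
  have hint (j : ι) : Integrable (fun x => g x * Φ j x) ν := hg.integrable_mul (hΦ j)
  rw [integral_finsetSum s fun j _ => (hint j).const_mul (a j)]
  simp_rw [integral_const_mul]

variable [DecidableEq ι]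

theorem integral_sq_sub_orthonormal_sum (hΦ : ∀ j, MemLp (Φ j) 2 ν)
    (horth : ∀ j k, ∫ x, Φ j x * Φ k x ∂ν = if j = k then 1 else 0)
    {y : α → ℝ} (hy : MemLp y 2 ν) (s : Finset ι) :
    ∫ x, (y x - ∑ j ∈ s, (∫ z, y z * Φ j z ∂ν) * Φ j x) ^ 2 ∂ν =
      ∫ x, y x ^ 2 ∂ν - ∑ j ∈ s, (∫ z, y z * Φ j z ∂ν) ^ 2 := by
  set c : ι → ℝ := fun j => ∫ z, y z * Φ j z ∂ν
  set T : α → ℝ := fun x => ∑ j ∈ s, c j * Φ j x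
  have hT : MemLp T 2 ν := by
    simpa [T, Finset.sum_fn] using memLp_finsetSum' s fun j _ => (hΦ j).const_mul (c j)
  have hyT : ∫ x, y x * T x ∂ν = ∑ j ∈ s, c j ^ 2 := by
    rw [integral_mul_finsetSum hy hΦ]
    simp_rw [sq]; rfl
  have hTΦ (k : ι) : ∫ x, T x * Φ k x ∂ν = if k ∈ s then c k else 0 := by
    simp_rw [mul_comm (T _)]
    rw [integral_mul_finsetSum (hΦ k) hΦ]
    simp_rw [horth k, mul_ite, mul_one, mul_zero]
    exact Finset.sum_ite_eq s k c
  have hTT : ∫ x, T x * T x ∂ν = ∑ j ∈ s, c j ^ 2 := by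
    rw [integral_mul_finsetSum hT hΦ]
    refine Finset.sum_congr rfl fun j hj => ?_
    rw [hTΦ, if_pos hj, sq]
  have hexpand : ∀ x, (y x - T x) ^ 2 = y x ^ 2 - 2 * (y x * T x) + T x * T x := fun x => by ring
  change ∫ x, (y x - T x) ^ 2 ∂ν = _
  simp_rw [hexpand]
  have hyT_int : Integrable (fun x => y x * T x) ν := hy.integrable_mul hT
  have hTT_int : Integrable (fun x => T x * T x) ν := hT.integrable_mul hT
  have hdiff_int : Integrable (fun x => y x ^ 2 - 2 * (y x * T x)) ν :=
    hy.integrable_sq.sub (hyT_int.const_mul 2)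
  rw [integral_add hdiff_int hTT_int,
    integral_sub hy.integrable_sq (hyT_int.const_mul 2), integral_const_mul, hyT, hTT]
  ring

end Orthonormal

section ProductBasis

variable {N : ℕ} {μ : Fin N → Measure ℝ} {ψ : Fin N → ℕ → ℝ → ℝ}

lemma integral_prodPsi_mul_prodPsi [∀ i, SigmaFinite (μ i)]
    (horth : ∀ i j k, ∫ t, ψ i j t * ψ i k t ∂(μ i) = if j = k then 1 else 0)
    (j k : Fin N → ℕ) :
    ∫ x, prodPsi ψ univ j x * prodPsi ψ univ k x ∂(joint μ) = if j = k then 1 else 0 := by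
  simp_rw [prodPsi, ← Finset.prod_mul_distrib]
  rw [joint, integral_fintype_prod_eq_prod (fun i t => ψ i (j i) t * ψ i (k i) t)]
  simp_rw [horth]
  by_cases hjk : j = k
  · simp [hjk]
  · obtain ⟨i, hi⟩ := Function.ne_iff.mp hjk
    rw [if_neg hjk]
    exact Finset.prod_eq_zero (Finset.mem_univ i) (if_neg hi)

lemma memLp_prodPsi [∀ i, IsFiniteMeasure (μ i)] (hψ : ∀ i j, MemLp (ψ i j) 2 (μ i))
    (j : Fin N → ℕ) : MemLp (prodPsi ψ univ j) 2 (joint μ) := by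
  have hint : Integrable (prodPsi ψ univ j) (joint μ) :=
    Integrable.fintype_prod fun i => (hψ i (j i)).integrable one_le_two
  refine (memLp_two_iff_integrable_sq hint.aestronglyMeasurable).mpr ?_
  simp_rw [prodPsi, ← Finset.prod_pow]
  exact Integrable.fintype_prod fun i => (hψ i (j i)).integrable_sq

lemma prodPsi_eq_prodPsi_univ (hψ0 : ∀ i t, ψ i 0 t = 1) {u : Finset (Fin N)}
    {j : Fin N → ℕ} (hj : ∀ i ∉ u, j i = 0) : prodPsi ψ u j = prodPsi ψ univ j := by
  funext x
  exact Finset.prod_subset (Finset.subset_univ u) fun i _ hi => by rw [hj i hi, hψ0]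

lemma pddCoeff_eq_pddCoeff_univ (hψ0 : ∀ i t, ψ i 0 t = 1) (y : (Fin N → ℝ) → ℝ)
    {u : Finset (Fin N)} {j : Fin N → ℕ} (hj : ∀ i ∉ u, j i = 0) :
    pddCoeff μ y ψ u j = pddCoeff μ y ψ univ j := by
  rw [pddCoeff, pddCoeff, prodPsi_eq_prodPsi_univ hψ0 hj]

end ProductBasis

section MultiIndex

variable {N : ℕ}

def indexSupport (j : Fin N → ℕ) : Finset (Fin N) := univ.filter fun i => j i ≠ 0

lemma mem_indexSet_iff {u : Finset (Fin N)} {j : Fin N → ℕ} :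
    j ∈ indexSet u ↔ indexSupport j = u := by
  simp only [indexSet, indexSupport, Set.mem_ofPred_eq, Finset.ext_iff, Finset.mem_filter,
    Finset.mem_univ, true_and, Nat.one_le_iff_ne_zero]
  constructor
  · rintro ⟨hu, hnu⟩ i
    exact ⟨fun hi => by_contra fun hiu => hi (hnu i hiu), hu i⟩
  · intro h
    exact ⟨fun i hi => (h i).mpr hi, fun i hi => by_contra fun hne => hi ((h i).mp hne)⟩

lemma mem_indexFinset_iff {u : Finset (Fin N)} {m : ℕ} {j : Fin N → ℕ} :
    j ∈ indexFinset u m ↔ j ∈ Icc 0 (fun _ => m) ∧ indexSupport j = u := by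
  rw [indexFinset, Finset.mem_filter, ← mem_indexSet_iff]
  rfl

lemma indexSupport_eq_empty_iff {j : Fin N → ℕ} : indexSupport j = ∅ ↔ j = 0 := by
  simp [indexSupport, Finset.filter_eq_empty_iff, funext_iff]

def pddIndexFinset (S m : ℕ) : Finset (Fin N → ℕ) :=
  (Icc 0 fun _ => m).filter fun j => (indexSupport j).card ≤ S

end MultiIndex

lemma pddTrunc_eq_sum {N : ℕ} {μ : Fin N → Measure ℝ} {ψ : Fin N → ℕ → ℝ → ℝ}
    (hψ0 : ∀ i t, ψ i 0 t = 1) (y : (Fin N → ℝ) → ℝ) (S m : ℕ) (x : Fin N → ℝ) :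
    pddTrunc μ y ψ S m x =
      ∑ j ∈ pddIndexFinset S m, pddCoeff μ y ψ univ j * prodPsi ψ univ j x := by
  -- the constant term of `pddTrunc` is the component `u = ∅`
  have hconst : ∫ z, y z ∂(joint μ) =
      ∑ j ∈ indexFinset ∅ m, pddCoeff μ y ψ ∅ j * prodPsi ψ ∅ j x := by
    have : indexFinset (∅ : Finset (Fin N)) m = {0} := by
      ext j
      simp only [mem_indexFinset_iff, indexSupport_eq_empty_iff, Finset.mem_singleton,
        and_iff_right_iff_imp]
      rintro rfl
      simp
    simp [this, pddCoeff, prodPsi]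
  have hcomponents : univ.filter (fun u : Finset (Fin N) => u.card ≤ S) =
      insert ∅ (univ.filter fun u : Finset (Fin N) => u ≠ ∅ ∧ u.card ≤ S) := by
    ext u
    by_cases hu : u = ∅ <;> simp [hu]
  rw [pddTrunc, hconst, ← Finset.sum_insert (f := fun u => ∑ j ∈ indexFinset u m,
      pddCoeff μ y ψ u j * prodPsi ψ u j x) (by simp), ← hcomponents,
    ← Finset.sum_fiberwise_of_maps_to (g := indexSupport) (t := univ.filter fun u => u.card ≤ S)
      (s := pddIndexFinset S m) (by simp [pddIndexFinset])]
  refine Finset.sum_congr rfl fun u hu => ?_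
  have hfiber : indexFinset u m = (pddIndexFinset S m).filter (indexSupport · = u) := by
    ext j
    simp only [mem_indexFinset_iff, pddIndexFinset, Finset.mem_filter]
    constructor
    · rintro ⟨hj, rfl⟩
      exact ⟨⟨hj, (Finset.mem_filter.mp hu).2⟩, rfl⟩
    · rintro ⟨⟨hj, -⟩, rfl⟩
      exact ⟨hj, rfl⟩
  rw [← hfiber]
  refine Finset.sum_congr rfl fun j hj => ?_
  have hsupp : ∀ i ∉ u, j i = 0 := (mem_indexSet_iff.mpr (mem_indexFinset_iff.mp hj).2).2
  rw [pddCoeff_eq_pddCoeff_univ hψ0 y hsupp, prodPsi_eq_prodPsi_univ hψ0 hsupp]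

lemma pddCoeff_univ_eq_zero_of_card_lt {N : ℕ} {μ : Fin N → Measure ℝ}
    {ψ : Fin N → ℕ → ℝ → ℝ} (hψ0 : ∀ i t, ψ i 0 t = 1) {y : (Fin N → ℝ) → ℝ} {S : ℕ}
    (hC : ∀ (u : Finset (Fin N)) (j : Fin N → ℕ), S < u.card → j ∈ indexSet u →
      pddCoeff μ y ψ u j = 0)
    {j : Fin N → ℕ} (hj : S < (indexSupport j).card) : pddCoeff μ y ψ univ j = 0 := by
  have hj_mem : j ∈ indexSet (indexSupport j) := mem_indexSet_iff.mpr rfl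
  rw [← pddCoeff_eq_pddCoeff_univ hψ0 y hj_mem.2]
  exact hC _ j hj hj_mem

theorem stmt15_general {N : ℕ} (S m : ℕ)
    (μ : Fin N → MeasureTheory.Measure ℝ) [∀ i, IsProbabilityMeasure (μ i)]
    (y : (Fin N → ℝ) → ℝ) (hy : MemLp y 2 (joint μ))
    (ψ : Fin N → ℕ → ℝ → ℝ) (hψ : IsONBasis μ ψ)
    (hC : ∀ (u : Finset (Fin N)) (j : Fin N → ℕ), S < u.card → j ∈ indexSet u →
      pddCoeff μ y ψ u j = 0) :
    ∫ x, (y x - pddTrunc μ y ψ S m x) ^ 2 ∂(joint μ) ≤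
      ∫ x, (y x - pceApprox μ y ψ m x) ^ 2 ∂(joint μ) := by
  obtain ⟨hψ0, hψL2, hψorth, -⟩ := hψ
  set c := pddCoeff μ y ψ univ
  have hbessel (s : Finset (Fin N → ℕ)) :
      ∫ x, (y x - ∑ j ∈ s, c j * prodPsi ψ univ j x) ^ 2 ∂(joint μ) =
        ∫ x, y x ^ 2 ∂(joint μ) - ∑ j ∈ s, c j ^ 2 :=
    integral_sq_sub_orthonormal_sum (memLp_prodPsi hψL2) (integral_prodPsi_mul_prodPsi hψorth)
      hy s
  simp_rw [pddTrunc_eq_sum hψ0, pceApprox]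
  rw [hbessel, hbessel]
  refine sub_le_sub_left ?_ _
  set B := (Icc 0 fun _ => m).filter fun j : Fin N → ℕ => ∑ i, j i ≤ m
  have hvanish : ∀ j ∈ B, c j ^ 2 ≠ 0 → j ∈ pddIndexFinset S m := by
    intro j hj hcj
    refine Finset.mem_filter.mpr ⟨(Finset.mem_filter.mp hj).1, not_lt.mp fun hS => hcj ?_⟩
    simp [c, pddCoeff_univ_eq_zero_of_card_lt hψ0 hC hS]
  calc ∑ j ∈ B, c j ^ 2 = ∑ j ∈ B with j ∈ pddIndexFinset S m, c j ^ 2 :=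
        (Finset.sum_filter_of_ne hvanish).symm
    _ ≤ ∑ j ∈ pddIndexFinset S m, c j ^ 2 :=
        Finset.sum_le_sum_of_subset_of_nonneg (fun j hj => (Finset.mem_filter.mp hj).2)
          fun _ _ _ => sq_nonneg _

/-- if all PDD coefficients of component functions involving more than `S`
variables vanish, then the mean-squared error of the `m`-th order PCE approximation is at
least that of the `S`-variate, `m`-th order PDD approximation. -/
theorem stmt15 {N : ℕ} (S m : ℕ) (hS1 : 1 ≤ S) (hSN : S < N) (hm : 1 ≤ m)
    (f : Fin N → ℝ → ℝ) (hf : ∀ i, Measurable (f i)) (hf0 : ∀ i t, 0 ≤ f i t)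
    (μ : Fin N → MeasureTheory.Measure ℝ) [∀ i, IsProbabilityMeasure (μ i)]
    (hμ : ∀ i, μ i = (volume : MeasureTheory.Measure ℝ).withDensity
      fun t => ENNReal.ofReal (f i t))
    (y : (Fin N → ℝ) → ℝ) (hy : MemLp y 2 (joint μ))
    (ψ : Fin N → ℕ → ℝ → ℝ) (hψ : IsONBasis μ ψ)
    (hC : ∀ (u : Finset (Fin N)) (j : Fin N → ℕ), S < u.card → j ∈ indexSet u →
      pddCoeff μ y ψ u j = 0) :
    ∫ x, (y x - pddTrunc μ y ψ S m x) ^ 2 ∂(joint μ) ≤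
      ∫ x, (y x - pceApprox μ y ψ m x) ^ 2 ∂(joint μ) :=
  stmt15_general S m μ y hy ψ hψ hC
end
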